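/- Let G be a finite connected simple graph in which every vertex has even degree. Then there exists a colouring of the edges of G with two colours (black and white) such that every vertex is incident to the same number of black edges as white edges, if and only if the total number of edges of G is even. -/

import Mathlib

/-!
Summing over all vertices the number of incident black edges counts every black edge twice, and
likewise for white, so a balanced colouring has as many black as white edges.

Conversely, a connected graph with all degrees even has an Eulerian circuit: a longest trail is
closed (otherwise it extends at its start, where it has used an odd number of the evenly many
incident edges), and it uses every edge (otherwise, by connectivity, it can be rotated to start at
a vertex with an unused edge and then extended). Colour the edges alternately along such a circuit.
Each pass through a vertex uses one edge of each colour, and when the number of edges is even the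
first and the last edge of the circuit also have different colours.
-/

open Finset

theorem Finset.card_filter_eq_true_sub_card_filter_eq_false {α : Type*} (s : Finset α)
    (c : α → Bool) :
    (#{a ∈ s | c a = true} : ℤ) - #{a ∈ s | c a = false} = ∑ a ∈ s, if c a then 1 else -1 := by
  simp [sum_ite, sub_eq_add_neg]

namespace SimpleGraph

variable {V : Type*} {G : SimpleGraph V}

theorem sum_card_filter_incidenceFinset [Fintype V] [DecidableEq V] [DecidableRel G.Adj]
    (P : Sym2 V → Prop) [DecidablePred P] :
    ∑ v, #{e ∈ G.incidenceFinset v | P e} = 2 * #{e ∈ G.edgeFinset | P e} := by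
  have hinc : ∀ v, {e ∈ G.incidenceFinset v | P e} =
      {e ∈ G.edgeFinset | P e}.bipartiteAbove (fun v e => v ∈ e) v := by
    intro v
    rw [incidenceFinset_eq_filter, filter_filter, bipartiteAbove, filter_filter]
    simp only [and_comm]
  have hends : ∀ e ∈ {e ∈ G.edgeFinset | P e},
      #((univ : Finset V).bipartiteBelow (fun v e => v ∈ e) e) = 2 := by
    intro e he
    rw [← Sym2.card_toFinset_of_not_isDiag e (G.not_isDiag_of_mem_edgeFinset (mem_filter.1 he).1)]
    congr 1
    ext v
    simp
  simp only [hinc, sum_card_bipartiteAbove_eq_sum_card_bipartiteBelow, sum_congr rfl hends,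
    sum_const, smul_eq_mul, mul_comm]

namespace Walk

theorem exists_mem_support_adj_notMem_edges {u v : V} (p : G.Walk u v) (hconn : G.Connected)
    {e : Sym2 V} (he : e ∈ G.edgeSet) (hne : e ∉ p.edges) :
    ∃ x ∈ p.support, ∃ y, G.Adj x y ∧ s(x, y) ∉ p.edges := by
  induction e using Sym2.ind with
  | _ a b =>
  by_cases ha : a ∈ p.support
  · exact ⟨a, ha, b, he, hne⟩
  obtain ⟨r⟩ := hconn.preconnected u a
  obtain ⟨d, -, hfst, hsnd⟩ := r.exists_boundary_dart {x | x ∈ p.support} p.start_mem_support ha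
  exact ⟨d.fst, hfst, d.snd, d.adj, fun h => hsnd (p.snd_mem_support_of_mem_edges h)⟩

section Colouring

variable [DecidableEq V]

def alternatingColouring : ∀ {u v : V}, G.Walk u v → Sym2 V → Bool
  | _, _, .nil => fun _ => true
  | u, _, .cons (v := w) _ p => fun e => if e = s(u, w) then true else !p.alternatingColouring e

theorem IsTrail.sum_alternatingColouring {u v : V} {p : G.Walk u v} (hp : p.IsTrail) (x : V) :
    ∑ e ∈ p.edges.toFinset with x ∈ e, (if p.alternatingColouring e then (1 : ℤ) else -1) =
      (if x = u then 1 else 0) - (-1) ^ p.length * (if x = v then 1 else 0) := by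
  induction p with
  | nil => simp
  | @cons u w v h p ih =>
    rw [isTrail_cons] at hp
    have hflip : ∀ e ∈ {e ∈ p.edges.toFinset | x ∈ e},
        (if (cons h p).alternatingColouring e then (1 : ℤ) else -1) =
          -(if p.alternatingColouring e then 1 else -1) := by
      intro e he
      have hne : e ≠ s(u, w) := by rintro rfl; simp_all
      cases hc : p.alternatingColouring e <;> simp [alternatingColouring, hne, hc]
    have hnot : s(u, w) ∉ {e ∈ p.edges.toFinset | x ∈ e} := by simp [hp.2]
    rw [edges_cons, List.toFinset_cons, filter_insert]
    by_cases hx : x ∈ s(u, w)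
    · rw [if_pos hx, sum_insert hnot, sum_congr rfl hflip, sum_neg_distrib, ih hp.1]
      obtain rfl | rfl := Sym2.mem_iff.1 hx
      · simp only [alternatingColouring, if_true, if_neg h.ne, length_cons, pow_succ]
        ring
      · simp only [alternatingColouring, if_true, if_neg h.ne', length_cons, pow_succ]
        ring
    · rw [if_neg hx, sum_congr rfl hflip, sum_neg_distrib, ih hp.1]
      simp only [Sym2.mem_iff, not_or] at hx
      simp only [if_neg hx.1, if_neg hx.2, length_cons, pow_succ]
      ring

end Colouring

section Finite

variable [Fintype V] [DecidableEq V] [DecidableRel G.Adj]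

theorem IsTrail.exists_adj_notMem_edges {u v : V} {p : G.Walk u v} (hp : p.IsTrail)
    (huv : u ≠ v) (hu : Even (G.degree u)) : ∃ w, G.Adj u w ∧ s(u, w) ∉ p.edges := by
  by_contra! hall
  have hinc : (p.edges.filter (u ∈ ·)).toFinset = G.incidenceFinset u := by
    ext e
    simp only [List.mem_toFinset, List.mem_filter, decide_eq_true_eq, mem_incidenceFinset,
      incidenceSet, Set.mem_ofPred_eq]
    refine ⟨fun ⟨he, hue⟩ => ⟨p.edges_subset_edgeSet he, hue⟩, fun ⟨he, hue⟩ => ⟨?_, hue⟩⟩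
    obtain ⟨w, rfl⟩ := Sym2.mem_iff_exists.1 hue
    exact hall w he
  have hodd : ¬ Even (p.edges.countP (u ∈ ·)) := by simp [hp.even_countP_edges_iff, huv]
  rw [List.countP_eq_length_filter, ← List.toFinset_card_of_nodup (hp.edges_nodup.filter _),
    hinc, card_incidenceFinset_eq_degree] at hodd
  exact hodd hu

theorem IsEulerian.length_eq_card_edgeFinset {u v : V} {p : G.Walk u v} (hp : p.IsEulerian) :
    p.length = #G.edgeFinset := by
  rw [← hp.edgesFinset_eq, ← length_edges]
  rfl

theorem IsEulerian.card_filter_alternatingColouring_eq {u : V} {p : G.Walk u u}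
    (hp : p.IsEulerian) (heven : Even p.length) (x : V) :
    #{e ∈ G.incidenceFinset x | p.alternatingColouring e = true} =
      #{e ∈ G.incidenceFinset x | p.alternatingColouring e = false} := by
  have hinc : G.incidenceFinset x = {e ∈ p.edges.toFinset | x ∈ e} := by
    rw [incidenceFinset_eq_filter]
    congr 1
    ext e
    simp [hp.mem_edges_iff]
  have hsum := hp.isTrail.sum_alternatingColouring x
  rw [← hinc, ← card_filter_eq_true_sub_card_filter_eq_false, heven.neg_one_pow, one_mul,
    sub_self, sub_eq_zero] at hsum
  exact_mod_cast hsum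

end Finite

end Walk

theorem Connected.exists_isEulerian [Fintype V] [DecidableEq V] [DecidableRel G.Adj]
    (hconn : G.Connected) (hdeg : ∀ v, Even (G.degree v)) :
    ∃ (u : V) (p : G.Walk u u), p.IsEulerian := by
  have := hconn.nonempty
  obtain ⟨u, v, p, hp, hmax⟩ := Walk.exists_isTrail_forall_isTrail_length_le_length G
  obtain rfl : u = v := by
    by_contra huv
    obtain ⟨w, huw, hw⟩ := hp.exists_adj_notMem_edges huv (hdeg u)
    have := hmax _ _ (.cons huw.symm p) <| (Walk.isTrail_cons _ _).2 ⟨hp, by rwa [Sym2.eq_swap]⟩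
    simp at this
  refine ⟨u, p, hp.isEulerian_of_forall_mem fun e he => by_contra fun hne => ?_⟩
  obtain ⟨x, hx, y, hxy, hy⟩ := p.exists_mem_support_adj_notMem_edges hconn he hne
  have := hmax _ _ (.cons hxy.symm (p.rotate x hx)) <| (Walk.isTrail_cons _ _).2
    ⟨hp.rotate hx, by rwa [(p.rotate_edges x hx).mem_iff, Sym2.eq_swap]⟩
  simp at this

end SimpleGraph

open SimpleGraph in
/-- Even Colouring: a finite connected simple graph all of whose
vertices have even degree admits an edge 2-colouring (black = `true`,
white = `false`) in which every vertex is incident to equally many black and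
white edges, if and only if the total number of edges is even. -/
theorem even_colouring_iff_even_edges {V : Type*} [Fintype V] [DecidableEq V]
    (G : SimpleGraph V) [DecidableRel G.Adj]
    (hconn : G.Connected) (hdeg : ∀ v : V, Even (G.degree v)) :
    (∃ c : Sym2 V → Bool, ∀ v : V,
        ((G.incidenceFinset v).filter (fun e => c e = true)).card =
          ((G.incidenceFinset v).filter (fun e => c e = false)).card) ↔
      Even G.edgeFinset.card := by
  constructor
  · rintro ⟨c, hc⟩
    have hblack := G.sum_card_filter_incidenceFinset (c · = true)
    rw [sum_congr rfl fun v _ => hc v, G.sum_card_filter_incidenceFinset] at hblack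
    have hsplit := card_filter_add_card_filter_not (s := G.edgeFinset) (fun e => c e = true)
    simp only [Bool.not_eq_true] at hsplit
    exact ⟨#{e ∈ G.edgeFinset | c e = true}, by omega⟩
  · intro hev
    obtain ⟨u, p, hp⟩ := hconn.exists_isEulerian hdeg
    exact ⟨p.alternatingColouring,
      hp.card_filter_alternatingColouring_eq (hp.length_eq_card_edgeFinset ▸ hev)⟩
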